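/- Let λ > 0 and let Q be the intensity matrix of the front process on the ladder. Suppose π : ℕ → ℝ is nonnegative and summable with ∑_{j=0}^∞ π_j = 1, and suppose that for every column j ∈ ℕ the series ∑_{i=0}^∞ π_i·Q(i,j) converges absolutely to 0. Then: π_1 = (2+λ)·π_0 − λ; π_2 = (2λ²+7λ+2)·π_0 − (2λ²+3λ); π_3 = (6λ³+26λ²+22λ+2)·π_0 − (6λ³+14λ²+6λ); and for every n ≥ 4, π_n = (λn+3)·π_{n−1} − (λ(n−2)+3)·π_{n−2} + π_{n−3}. -/
import Mathlib


/-- Intensity matrix of the front process on the ladder with vertical intensity `l`: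
`Q(0,0) = −2`, `Q(0,1) = 2`, `Q(0,j) = 0` for `j ≥ 2`; and for `i ≥ 1`:
`Q(i,j) = l` for `0 ≤ j ≤ i−2`, `Q(i,i−1) = 1+l`, `Q(i,i) = −(2+il)`,
`Q(i,i+1) = 1`, `Q(i,j) = 0` for `j ≥ i+2`. -/
noncomputable def ladderQ (l : ℝ) (i j : ℕ) : ℝ :=
  if i = 0 then (if j = 0 then -2 else if j = 1 then 2 else 0)
  else if j + 2 ≤ i then l
  else if j + 1 = i then 1 + l
  else if j = i then -(2 + (i : ℝ) * l)
  else if j = i + 1 then 1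
  else 0

lemma ladderQ_tail (l : ℝ) (j i : ℕ) : ladderQ l (i + (j + 2)) j = l := by
  rw [ladderQ, if_neg (by omega), if_pos (by omega)]

/-- Any nonnegative summable probability vector `π` that is stationary for
the front process on the ladder (each column series converging absolutely to `0`)
satisfies the stated explicit relations and three-term recursion. -/
theorem stmt_5 (l : ℝ) (hl : 0 < l) (π : ℕ → ℝ)
    (hnonneg : ∀ n, 0 ≤ π n) (hsummable : Summable π) (hsum : ∑' n, π n = 1)
    (hstatSummable : ∀ j : ℕ, Summable (fun i => π i * ladderQ l i j))
    (hstat : ∀ j : ℕ, ∑' i, π i * ladderQ l i j = 0) :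
    π 1 = (2 + l) * π 0 - l ∧
    π 2 = (2 * l ^ 2 + 7 * l + 2) * π 0 - (2 * l ^ 2 + 3 * l) ∧
    π 3 = (6 * l ^ 3 + 26 * l ^ 2 + 22 * l + 2) * π 0
          - (6 * l ^ 3 + 14 * l ^ 2 + 6 * l) ∧
    ∀ n : ℕ, 4 ≤ n →
      π n = (l * (n : ℝ) + 3) * π (n - 1) - (l * ((n : ℝ) - 2) + 3) * π (n - 2)
            + π (n - 3) := by
  have key : ∀ j : ℕ, (∑ i ∈ Finset.range (j + 2), π i * ladderQ l i j)
      + l * (1 - ∑ i ∈ Finset.range (j + 2), π i) = 0 := by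
    intro j
    have h1 := Summable.sum_add_tsum_nat_add (j + 2) (hstatSummable j)
    have h2 := Summable.sum_add_tsum_nat_add (j + 2) hsummable
    rw [hsum] at h2
    rw [hstat j] at h1
    have ht : (∑' i, π (i + (j + 2)) * ladderQ l (i + (j + 2)) j)
        = (1 - ∑ i ∈ Finset.range (j + 2), π i) * l := by
      have hc : ∀ i, π (i + (j + 2)) * ladderQ l (i + (j + 2)) j
          = π (i + (j + 2)) * l := by
        intro i; rw [ladderQ_tail]
      rw [tsum_congr hc, tsum_mul_right]
      have : (∑' i, π (i + (j + 2))) = 1 - ∑ i ∈ Finset.range (j + 2), π i := by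
        linarith
      rw [this]
    simp only [ht] at h1
    linarith
  -- equation for column 0
  have E0 := key 0
  have E1 := key 1
  simp [Finset.sum_range_succ, ladderQ] at E0 E1
  -- general equation for column k+2
  have E : ∀ k : ℕ, π (k + 1) - (2 + ((k : ℝ) + 2) * l) * π (k + 2)
      + (1 + l) * π (k + 3)
      + l * (1 - ∑ i ∈ Finset.range (k + 4), π i) = 0 := by
    intro k
    have hk := key (k + 2)
    have hq1 : ladderQ l (k + 1) (k + 2) = 1 := by
      rw [ladderQ, if_neg (by omega), if_neg (by omega), if_neg (by omega),
        if_neg (by omega), if_pos (by omega)]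
    have hq2 : ladderQ l (k + 2) (k + 2) = -(2 + ((k : ℝ) + 2) * l) := by
      rw [ladderQ, if_neg (by omega), if_neg (by omega), if_neg (by omega),
        if_pos rfl]
      push_cast; ring
    have hq3 : ladderQ l (k + 3) (k + 2) = 1 + l := by
      rw [ladderQ, if_neg (by omega), if_neg (by omega), if_pos (by omega)]
    have hz : (∑ i ∈ Finset.range (k + 1), π i * ladderQ l i (k + 2)) = 0 := by
      apply Finset.sum_eq_zero
      intro i hi
      have hi' : i < k + 1 := Finset.mem_range.mp hi
      have : ladderQ l i (k + 2) = 0 := by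
        rcases Nat.eq_zero_or_pos i with h | h
        · subst h
          rw [ladderQ, if_pos rfl, if_neg (by omega), if_neg (by omega)]
        · rw [ladderQ, if_neg (by omega), if_neg (by omega), if_neg (by omega),
            if_neg (by omega), if_neg (by omega)]
      rw [this, mul_zero]
    have hsplit : (∑ i ∈ Finset.range (k + 2 + 2), π i * ladderQ l i (k + 2))
        = π (k + 1) * 1 + π (k + 2) * (-(2 + ((k : ℝ) + 2) * l))
          + π (k + 3) * (1 + l) := by
      rw [show k + 2 + 2 = (k + 3) + 1 from rfl, Finset.sum_range_succ,
        show k + 3 = (k + 2) + 1 from rfl, Finset.sum_range_succ,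
        show k + 2 = (k + 1) + 1 from rfl, Finset.sum_range_succ,
        hz, hq1, hq2, hq3]
      ring
    rw [hsplit] at hk
    have : (k + 2 + 2) = k + 4 := by omega
    rw [this] at hk
    linarith
  have E2 := E 0
  have E3 := E 1
  simp [Finset.sum_range_succ] at E2 E3
  have h1 : π 1 = (2 + l) * π 0 - l := by linarith
  have h2 : π 2 = (2 * l ^ 2 + 7 * l + 2) * π 0 - (2 * l ^ 2 + 3 * l) := by
    nlinarith [E1, h1]
  have h3 : π 3 = (6 * l ^ 3 + 26 * l ^ 2 + 22 * l + 2) * π 0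
      - (6 * l ^ 3 + 14 * l ^ 2 + 6 * l) := by
    nlinarith [E2, h1, h2]
  refine ⟨h1, h2, h3, ?_⟩
  intro n hn
  obtain ⟨m, rfl⟩ : ∃ m, n = m + 4 := ⟨n - 4, by omega⟩
  have hA := E (m + 1)
  have hB := E m
  have hs : (∑ i ∈ Finset.range (m + 1 + 4), π i)
      = (∑ i ∈ Finset.range (m + 4), π i) + π (m + 4) := by
    rw [show m + 1 + 4 = (m + 4) + 1 from rfl, Finset.sum_range_succ]
  rw [hs] at hA
  have e1 : m + 4 - 1 = m + 3 := by omega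
  have e2 : m + 4 - 2 = m + 2 := by omega
  have e3 : m + 4 - 3 = m + 1 := by omega
  rw [e1, e2, e3]
  have : π (m + 1 + 1) = π (m + 2) := by norm_num
  have : π (m + 1 + 2) = π (m + 3) := by norm_num
  have : π (m + 1 + 3) = π (m + 4) := by norm_num
  push_cast at hA hB ⊢
  norm_num at hA hB
  linear_combination hA - hB
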